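/- arXiv:2507.20296 — 3 statements merged into one kernel-verified Lean document; each statement's English description precedes it below -/
import Mathlib

section
/- Let g ≥ 1, let w_{j,k} ∈ ℂ for 1 ≤ j < k ≤ g be fixed, and let z ∈ ℂ^g. For t > 0 define the shifted theta series F(t) = Σ_{m∈ℤ^g} exp 2πi( (1/2) Σ_{j=1}^g m_j(m_j−1)·(it) + Σ_{j<k} m_j m_k w_{j,k} + Σ_{j=1}^g m_j z_j ). Then there exists t_0 > 0 such that for all t > t_0 the series converges absolutely, and as t → ∞, F(t) converges to the finite sum Σ_{m∈{0,1}^g} exp 2πi( Σ_{j<k} m_j m_k w_{j,k} + Σ_{j=1}^g m_j z_j ). -/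
/-!
The exponent of the `m`-th term is `-π t Σ_j m_j (m_j - 1)` plus `2πi` times a phase that does not
depend on `t`. Since `m (m - 1) ≥ 0` for every integer `m`, with equality exactly on `{0, 1}`, the
terms decrease in modulus as `t` grows, tend to `0` off `{0,1}^g` and are constant on `{0,1}^g`;
dominated convergence for series then gives the limit. The dominating series is summable because
`m (m - 1) ≥ m² - |m|` while the phase grows at most quadratically in `m`, so for large `t` the terms
are bounded by a product of one-variable Jacobi theta bounds.
-/

open scoped Real

open Finset

/-- The general term of the shifted theta series with diagonal period entries `it`:
`exp 2πi( (1/2) Σ_j m_j(m_j−1)·(it) + Σ_{j<k} m_j m_k w_{j,k} + Σ_j m_j z_j )`. -/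
noncomputable def shiftedThetaTerm (g : ℕ) (w : Fin g → Fin g → ℂ) (z : Fin g → ℂ)
    (t : ℝ) (m : Fin g → ℤ) : ℂ :=
  Complex.exp (2 * (π : ℂ) * Complex.I *
    ((1 / 2) * ∑ j, (m j : ℂ) * ((m j : ℂ) - 1) * (Complex.I * (t : ℂ))
      + ∑ pr ∈ Finset.univ.filter (fun pr : Fin g × Fin g => pr.1 < pr.2),
          (m pr.1 : ℂ) * (m pr.2 : ℂ) * w pr.1 pr.2
      + ∑ j, (m j : ℂ) * z j))

open Filter Topology

theorem summable_prod_apply_of_nonneg {α : Type*} {f : α → ℝ} (hf0 : ∀ a, 0 ≤ f a)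
    (hf : Summable f) (n : ℕ) : Summable fun m : Fin n → α => ∏ j, f (m j) := by
  induction n with
  | zero => exact Summable.of_finite
  | succ n ih =>
    have hprod := hf.mul_of_nonneg ih hf0 fun m => prod_nonneg fun j _ => hf0 (m j)
    refine ((Fin.consEquiv fun _ => α).symm.summable_iff.mpr hprod).congr fun m => ?_
    simp [Fin.prod_univ_succ, Fin.consEquiv, Fin.tail]

theorem abs_mul_abs_le_sum_sq {ι : Type*} [Fintype ι] (x : ι → ℝ) (j k : ι) :
    |x j| * |x k| ≤ ∑ i, x i ^ 2 := by
  have hj := single_le_sum (fun i _ => sq_nonneg (x i)) (mem_univ j)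
  have hk := single_le_sum (fun i _ => sq_nonneg (x i)) (mem_univ k)
  nlinarith [two_mul_le_add_sq |x j| |x k|, sq_abs (x j), sq_abs (x k)]

theorem Int.mul_sub_one_nonneg (n : ℤ) : 0 ≤ n * (n - 1) := by
  rcases le_or_gt n 0 with h | h <;> nlinarith

namespace ShiftedTheta

variable {g : ℕ}

def diagExponent (m : Fin g → ℤ) : ℤ := ∑ j, m j * (m j - 1)

def upperPairs (g : ℕ) : Finset (Fin g × Fin g) := univ.filter fun pr => pr.1 < pr.2

noncomputable def phase (w : Fin g → Fin g → ℂ) (z : Fin g → ℂ) (m : Fin g → ℤ) : ℂ :=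
  ∑ pr ∈ upperPairs g, (m pr.1 : ℂ) * (m pr.2 : ℂ) * w pr.1 pr.2 + ∑ j, (m j : ℂ) * z j

noncomputable def phaseBound (w : Fin g → Fin g → ℂ) (z : Fin g → ℂ) : ℝ :=
  ∑ pr ∈ upperPairs g, ‖w pr.1 pr.2‖ + ‖z‖

noncomputable def limitTerm (w : Fin g → Fin g → ℂ) (z : Fin g → ℂ) (m : Fin g → ℤ) : ℂ :=
  if diagExponent m = 0 then Complex.exp (2 * π * Complex.I * phase w z m) else 0

theorem diagExponent_nonneg (m : Fin g → ℤ) : 0 ≤ diagExponent m :=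
  sum_nonneg fun j _ => (m j).mul_sub_one_nonneg

theorem diagExponent_eq_zero_iff {m : Fin g → ℤ} :
    diagExponent m = 0 ↔ ∀ j, m j = 0 ∨ m j = 1 := by
  simp only [diagExponent, sum_eq_zero_iff_of_nonneg fun j _ => (m j).mul_sub_one_nonneg,
    mem_univ, true_implies, mul_eq_zero, sub_eq_zero]

theorem phaseBound_nonneg (w : Fin g → Fin g → ℂ) (z : Fin g → ℂ) : 0 ≤ phaseBound w z := by
  unfold phaseBound
  positivity

theorem shiftedThetaTerm_eq (w : Fin g → Fin g → ℂ) (z : Fin g → ℂ) (t : ℝ) (m : Fin g → ℤ) :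
    shiftedThetaTerm g w z t m = (Real.exp (-(π * t * diagExponent m)) : ℂ) *
      Complex.exp (2 * π * Complex.I * phase w z m) := by
  rw [Complex.ofReal_exp, ← Complex.exp_add, shiftedThetaTerm, phase, upperPairs, diagExponent]
  congr 1
  rw [← sum_mul]
  push_cast
  linear_combination (π * t * ∑ j, (m j : ℂ) * ((m j : ℂ) - 1)) * Complex.I_sq

theorem norm_shiftedThetaTerm (w : Fin g → Fin g → ℂ) (z : Fin g → ℂ) (t : ℝ) (m : Fin g → ℤ) :
    ‖shiftedThetaTerm g w z t m‖ = Real.exp (-(π * t * diagExponent m)) *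
      ‖Complex.exp (2 * π * Complex.I * phase w z m)‖ := by
  rw [shiftedThetaTerm_eq, norm_mul, Complex.norm_real, Real.norm_of_nonneg (Real.exp_nonneg _)]

theorem norm_shiftedThetaTerm_le_of_le (w : Fin g → Fin g → ℂ) (z : Fin g → ℂ) {s t : ℝ}
    (hst : s ≤ t) (m : Fin g → ℤ) :
    ‖shiftedThetaTerm g w z t m‖ ≤ ‖shiftedThetaTerm g w z s m‖ := by
  rw [norm_shiftedThetaTerm, norm_shiftedThetaTerm]
  have : (0 : ℝ) ≤ diagExponent m := mod_cast diagExponent_nonneg m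
  gcongr

theorem tendsto_shiftedThetaTerm (w : Fin g → Fin g → ℂ) (z : Fin g → ℂ) (m : Fin g → ℤ) :
    Tendsto (fun t => shiftedThetaTerm g w z t m) atTop (𝓝 (limitTerm w z m)) := by
  simp_rw [shiftedThetaTerm_eq, limitTerm]
  split_ifs with h
  · simp [h]
  · have hpos : (0 : ℝ) < diagExponent m := mod_cast (diagExponent_nonneg m).lt_of_ne' h
    have hexp : Tendsto (fun t : ℝ => Real.exp (-(π * t * diagExponent m))) atTop (𝓝 0) :=
      Real.tendsto_exp_atBot.comp <| tendsto_neg_atTop_atBot.comp <|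
        (tendsto_id.const_mul_atTop Real.pi_pos).atTop_mul_const hpos
    simpa using ((Complex.continuous_ofReal.tendsto 0).comp hexp).mul_const _

theorem norm_phase_le (w : Fin g → Fin g → ℂ) (z : Fin g → ℂ) (m : Fin g → ℤ) :
    ‖phase w z m‖ ≤ phaseBound w z * (∑ i, (m i : ℝ) ^ 2 + ∑ i, |(m i : ℝ)|) := by
  have hN : 0 ≤ ∑ i, (m i : ℝ) ^ 2 := by positivity
  have hA : 0 ≤ ∑ i, |(m i : ℝ)| := by positivity
  have hcross : ‖∑ pr ∈ upperPairs g, (m pr.1 : ℂ) * (m pr.2 : ℂ) * w pr.1 pr.2‖ ≤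
      (∑ pr ∈ upperPairs g, ‖w pr.1 pr.2‖) * ∑ i, (m i : ℝ) ^ 2 := by
    rw [sum_mul]
    refine (norm_sum_le _ _).trans (sum_le_sum fun pr _ => ?_)
    rw [norm_mul, norm_mul, Complex.norm_intCast, Complex.norm_intCast, mul_comm]
    gcongr
    exact abs_mul_abs_le_sum_sq (fun i => (m i : ℝ)) pr.1 pr.2
  have hlin : ‖∑ j, (m j : ℂ) * z j‖ ≤ ‖z‖ * ∑ i, |(m i : ℝ)| := by
    rw [mul_sum]
    refine (norm_sum_le _ _).trans (sum_le_sum fun j _ => ?_)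
    rw [norm_mul, Complex.norm_intCast, mul_comm]
    gcongr
    exact norm_le_pi_norm z j
  calc ‖phase w z m‖ ≤ (∑ pr ∈ upperPairs g, ‖w pr.1 pr.2‖) * ∑ i, (m i : ℝ) ^ 2
        + ‖z‖ * ∑ i, |(m i : ℝ)| := (norm_add_le _ _).trans (add_le_add hcross hlin)
    _ ≤ phaseBound w z * (∑ i, (m i : ℝ) ^ 2 + ∑ i, |(m i : ℝ)|) := by
      unfold phaseBound
      nlinarith [norm_nonneg z,
        sum_nonneg fun pr (_ : pr ∈ upperPairs g) => norm_nonneg (w pr.1 pr.2)]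

/- The factors have the shape of `summable_pow_mul_jacobiTheta₂_term_bound`. -/
theorem norm_shiftedThetaTerm_le_prod (w : Fin g → Fin g → ℂ) (z : Fin g → ℂ) {C t : ℝ}
    (ht : 0 ≤ t) (m : Fin g → ℤ)
    (hC : ‖phase w z m‖ ≤ C * (∑ i, (m i : ℝ) ^ 2 + ∑ i, |(m i : ℝ)|)) :
    ‖shiftedThetaTerm g w z t m‖ ≤
      ∏ j, Real.exp (-π * ((t - 2 * C) * (m j : ℝ) ^ 2 - 2 * (t / 2 + C) * ((|m j| : ℤ) : ℝ))) := by
  rw [norm_shiftedThetaTerm, ← Real.exp_sum, Complex.norm_exp, ← Real.exp_add]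
  gcongr
  have hre : (2 * π * Complex.I * phase w z m).re ≤ 2 * π * ‖phase w z m‖ :=
    (Complex.re_le_norm _).trans_eq (by simp [abs_of_pos Real.pi_pos])
  have hdiag : ∑ j, ((m j : ℝ) ^ 2 - |(m j : ℝ)|) ≤ diagExponent m := by
    push_cast [diagExponent]
    exact sum_le_sum fun j _ => by nlinarith [le_abs_self (m j : ℝ)]
  have hrhs : ∑ j, -π * ((t - 2 * C) * (m j : ℝ) ^ 2 - 2 * (t / 2 + C) * ((|m j| : ℤ) : ℝ)) =
      -(π * t * ∑ j, ((m j : ℝ) ^ 2 - |(m j : ℝ)|)) +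
        2 * π * (C * (∑ i, (m i : ℝ) ^ 2 + ∑ i, |(m i : ℝ)|)) := by
    simp only [Int.cast_abs, mul_add, mul_sum, ← sum_neg_distrib, ← sum_add_distrib]
    exact sum_congr rfl fun j _ => by ring
  rw [hrhs]
  have := mul_le_mul_of_nonneg_left hdiag (by positivity : 0 ≤ π * t)
  nlinarith [Real.pi_pos]

theorem summable_norm_shiftedThetaTerm (w : Fin g → Fin g → ℂ) (z : Fin g → ℂ) {t : ℝ}
    (ht : 2 * phaseBound w z < t) : Summable fun m => ‖shiftedThetaTerm g w z t m‖ := by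
  have hcoord := summable_pow_mul_jacobiTheta₂_term_bound (t / 2 + phaseBound w z)
    (sub_pos.2 ht) 0
  simp only [pow_zero, one_mul] at hcoord
  refine (summable_prod_apply_of_nonneg (fun n => (Real.exp_pos _).le) hcoord g).of_nonneg_of_le
    (fun _ => norm_nonneg _) fun m => ?_
  exact norm_shiftedThetaTerm_le_prod w z (by linarith [phaseBound_nonneg w z]) m
    (norm_phase_le w z m)

theorem tsum_limitTerm (w : Fin g → Fin g → ℂ) (z : Fin g → ℂ) :
    ∑' m, limitTerm w z m = ∑ b : Fin g → Bool,
      Complex.exp (2 * (π : ℂ) * Complex.I *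
        (∑ pr ∈ univ.filter (fun pr : Fin g × Fin g => pr.1 < pr.2),
            (if b pr.1 then (1 : ℂ) else 0) * (if b pr.2 then (1 : ℂ) else 0) * w pr.1 pr.2
          + ∑ j, (if b j then (1 : ℂ) else 0) * z j)) := by
  set ι : (Fin g → Bool) → Fin g → ℤ := fun b j => if b j then 1 else 0
  have hι : Function.Injective ι := fun a b h => funext fun j => by
    have := congrFun h j
    cases ha : a j <;> cases hb : b j <;> simp [ι, ha, hb] at this ⊢
  have hsupp : Function.support (limitTerm w z) ⊆ Set.range ι := by
    intro m hm
    have h0 : diagExponent m = 0 := by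
      by_contra h
      exact hm (if_neg h)
    refine ⟨fun j => m j = 1, funext fun j => ?_⟩
    rcases diagExponent_eq_zero_iff.1 h0 j with h | h <;> simp [ι, h]
  rw [← hι.tsum_eq hsupp, tsum_fintype]
  refine sum_congr rfl fun b _ => ?_
  have hb : diagExponent (ι b) = 0 :=
    diagExponent_eq_zero_iff.2 fun j => by cases b j <;> simp [ι, *]
  rw [limitTerm, if_pos hb, phase, upperPairs]
  push_cast [ι, Int.cast_ite]
  rfl

end ShiftedTheta

open ShiftedTheta in
theorem shiftedTheta_tendsto_MTheta_general (g : ℕ)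
    (w : Fin g → Fin g → ℂ) (z : Fin g → ℂ) :
    ∃ t0 : ℝ, 0 < t0 ∧
      (∀ t : ℝ, t0 < t →
        Summable (fun m : Fin g → ℤ => ‖shiftedThetaTerm g w z t m‖)) ∧
      Filter.Tendsto (fun t : ℝ => ∑' m : Fin g → ℤ, shiftedThetaTerm g w z t m)
        Filter.atTop
        (nhds (∑ m : Fin g → Bool,
          Complex.exp (2 * (π : ℂ) * Complex.I *
            (∑ pr ∈ Finset.univ.filter (fun pr : Fin g × Fin g => pr.1 < pr.2),
                (if m pr.1 then (1 : ℂ) else 0) * (if m pr.2 then (1 : ℂ) else 0)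
                  * w pr.1 pr.2
              + ∑ j, (if m j then (1 : ℂ) else 0) * z j)))) := by
  set t0 := 2 * phaseBound w z + 1
  have hsummable : ∀ t, t0 ≤ t → Summable fun m => ‖shiftedThetaTerm g w z t m‖ :=
    fun t ht => summable_norm_shiftedThetaTerm w z (by linarith)
  refine ⟨t0, by linarith [phaseBound_nonneg w z], fun t ht => hsummable t ht.le, ?_⟩
  rw [← tsum_limitTerm]
  refine tendsto_tsum_of_dominated_convergence (hsummable t0 le_rfl)
    (tendsto_shiftedThetaTerm w z) ?_
  filter_upwards [eventually_ge_atTop t0] with t ht m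
  exact norm_shiftedThetaTerm_le_of_le w z ht m

/-- there is `t₀ > 0` such that the shifted theta series
`F(t) = Σ_{m∈ℤ^g} shiftedThetaTerm` converges absolutely for `t > t₀`, and as `t → ∞`,
`F(t)` converges to the finite sum over `m ∈ {0,1}^g` (the M-theta function). -/
theorem shiftedTheta_tendsto_MTheta (g : ℕ) (hg : 1 ≤ g)
    (w : Fin g → Fin g → ℂ) (z : Fin g → ℂ) :
    ∃ t0 : ℝ, 0 < t0 ∧
      (∀ t : ℝ, t0 < t →
        Summable (fun m : Fin g → ℤ => ‖shiftedThetaTerm g w z t m‖)) ∧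
      Filter.Tendsto (fun t : ℝ => ∑' m : Fin g → ℤ, shiftedThetaTerm g w z t m)
        Filter.atTop
        (nhds (∑ m : Fin g → Bool,
          Complex.exp (2 * (π : ℂ) * Complex.I *
            (∑ pr ∈ Finset.univ.filter (fun pr : Fin g × Fin g => pr.1 < pr.2),
                (if m pr.1 then (1 : ℂ) else 0) * (if m pr.2 then (1 : ℂ) else 0)
                  * w pr.1 pr.2
              + ∑ j, (if m j then (1 : ℂ) else 0) * z j)))) :=
  shiftedTheta_tendsto_MTheta_general g w z
end

section
/- Let κ_i, κ_j, λ_i, λ_j, λ_{i,j}, λ_{j,i} be real numbers, let ν_i, ν_j, ν_{i,j} be nonzero real numbers, and set a = λ_i − λ_{i,j}, b = λ_j − λ_{j,i}, c = ab + ν_{i,j}. Suppose complex numbers z, z_i, z_j, w satisfy the gluing relations (z − κ_i)(z_i − λ_i) = −ν_i, (z_i − λ_{i,j})(z_j − λ_{j,i}) = −ν_{i,j}, and (w − κ_j)(z_j − λ_j) = −ν_j. Then w − κ_j = ( a ν_j (z − κ_i) − ν_i ν_j ) / ( c (z − κ_i) − b ν_i ); equivalently, the map z ↦ w is the Möbius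 transformation given by the matrix [[cκ_j + aν_j, −cκ_iκ_j − ν_iν_j − aκ_iν_j − bκ_jν_i], [c, −cκ_i − bν_i]], whose determinant equals ν_i ν_j ν_{i,j}, so that after division by √(ν_i ν_j ν_{i,j}) it lies in SL₂(ℝ) when ν_i ν_j ν_{i,j} > 0. -/
/-!
Each plumbing relation `(x - p)(y - q) = -ν` is a Möbius map `y = q - ν/(x - p)`, so the return
map `z ↦ w` is a composite of three Möbius maps and the stated formula is the resulting
cross-multiplied identity, obtained by a linear combination of the three relations. Its
denominator equals `-(z_j - λ_j)(z_i - λ_{i,j})(z - κ_i)`, a product of factors that the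
relations force to be nonzero. The determinant is `ν_iν_j(c - ab) = ν_iν_jν_{i,j}`.
-/

section Plumbing

variable {K : Type*} [Field K] {κi κj li lj lij lji νi νj νij a b c z zi zj w : K}

theorem plumbing_denom_eq (ha : a = li - lij) (hb : b = lj - lji) (hc : c = a * b + νij)
    (h1 : (z - κi) * (zi - li) = -νi) (h2 : (zi - lij) * (zj - lji) = -νij) :
    c * (z - κi) - b * νi = -((zj - lj) * (zi - lij) * (z - κi)) := by
  subst ha hb hc
  linear_combination (z - κi) * h2 - (lj - lji) * h1

theorem plumbing_return_mul_denom (ha : a = li - lij) (hb : b = lj - lji)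
    (hc : c = a * b + νij) (h1 : (z - κi) * (zi - li) = -νi)
    (h2 : (zi - lij) * (zj - lji) = -νij) (h3 : (w - κj) * (zj - lj) = -νj) :
    (w - κj) * (c * (z - κi) - b * νi) = a * νj * (z - κi) - νi * νj := by
  rw [plumbing_denom_eq ha hb hc h1 h2]
  subst ha
  linear_combination -(zi - lij) * (z - κi) * h3 + νj * h1

theorem plumbing_denom_ne_zero (hνi : νi ≠ 0) (hνj : νj ≠ 0) (hνij : νij ≠ 0)
    (ha : a = li - lij) (hb : b = lj - lji) (hc : c = a * b + νij)
    (h1 : (z - κi) * (zi - li) = -νi) (h2 : (zi - lij) * (zj - lji) = -νij)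
    (h3 : (w - κj) * (zj - lj) = -νj) :
    c * (z - κi) - b * νi ≠ 0 := by
  have hz : z - κi ≠ 0 := left_ne_zero_of_mul (h1 ▸ neg_ne_zero.mpr hνi)
  have hzi : zi - lij ≠ 0 := left_ne_zero_of_mul (h2 ▸ neg_ne_zero.mpr hνij)
  have hzj : zj - lj ≠ 0 := right_ne_zero_of_mul (h3 ▸ neg_ne_zero.mpr hνj)
  rw [plumbing_denom_eq ha hb hc h1 h2]
  exact neg_ne_zero.mpr (mul_ne_zero (mul_ne_zero hzj hzi) hz)

end Plumbing

section SchottkyGen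

variable {R : Type*} [CommRing R]

def schottkyGenMatrix (κi κj νi νj a b c : R) : Matrix (Fin 2) (Fin 2) R :=
  !![c * κj + a * νj, -(c * κi * κj + νi * νj + a * κi * νj + b * κj * νi);
     c, -(c * κi + b * νi)]

theorem det_schottkyGenMatrix (κi κj νi νj a b c : R) :
    (schottkyGenMatrix κi κj νi νj a b c).det = νi * νj * (c - a * b) := by
  rw [schottkyGenMatrix, Matrix.det_fin_two_of]
  ring

end SchottkyGen

theorem Matrix.det_inv_sqrt_det_smul {M : Matrix (Fin 2) (Fin 2) ℝ} (hM : 0 < M.det) :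
    ((√M.det)⁻¹ • M).det = 1 := by
  rw [Matrix.det_smul, Fintype.card_fin, inv_pow, Real.sq_sqrt hM.le, inv_mul_cancel₀ hM.ne']

/-- the plumbing (gluing) relations
`(z − κ_i)(z_i − λ_i) = −ν_i`, `(z_i − λ_{i,j})(z_j − λ_{j,i}) = −ν_{i,j}`,
`(w − κ_j)(z_j − λ_j) = −ν_j`, with `a = λ_i − λ_{i,j}`, `b = λ_j − λ_{j,i}`,
`c = ab + ν_{i,j}`, imply
`w − κ_j = (aν_j(z − κ_i) − ν_iν_j)/(c(z − κ_i) − bν_i)`; equivalently `z ↦ w` is the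
Möbius transformation of the matrix
`[[cκ_j + aν_j, −(cκ_iκ_j + ν_iν_j + aκ_iν_j + bκ_jν_i)], [c, −(cκ_i + bν_i)]]`,
whose determinant is `ν_iν_jν_{i,j}`, so after division by `√(ν_iν_jν_{i,j})` it lies in
`SL₂(ℝ)` when `ν_iν_jν_{i,j} > 0`. Here `lᵢ = λ_i`, `lij = λ_{i,j}`, etc. -/
theorem plumbing_gives_schottkyGen (κi κj li lj lij lji νi νj νij : ℝ)
    (hνi : νi ≠ 0) (hνj : νj ≠ 0) (hνij : νij ≠ 0)
    (a b c : ℝ) (ha : a = li - lij) (hb : b = lj - lji) (hc : c = a * b + νij)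
    (z zi zj w : ℂ)
    (h1 : (z - (κi : ℂ)) * (zi - (li : ℂ)) = -(νi : ℂ))
    (h2 : (zi - (lij : ℂ)) * (zj - (lji : ℂ)) = -(νij : ℂ))
    (h3 : (w - (κj : ℂ)) * (zj - (lj : ℂ)) = -(νj : ℂ)) :
    w - (κj : ℂ)
      = ((a : ℂ) * (νj : ℂ) * (z - (κi : ℂ)) - (νi : ℂ) * (νj : ℂ)) /
          ((c : ℂ) * (z - (κi : ℂ)) - (b : ℂ) * (νi : ℂ)) ∧
    w = (((c : ℂ) * κj + (a : ℂ) * νj) * z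
          - ((c : ℂ) * κi * κj + (νi : ℂ) * νj + (a : ℂ) * κi * νj + (b : ℂ) * κj * νi)) /
        ((c : ℂ) * z - ((c : ℂ) * κi + (b : ℂ) * νi)) ∧
    Matrix.det !![c * κj + a * νj, -(c * κi * κj + νi * νj + a * κi * νj + b * κj * νi);
        c, -(c * κi + b * νi)] = νi * νj * νij ∧
    (0 < νi * νj * νij →
      Matrix.det ((Real.sqrt (νi * νj * νij))⁻¹ •
        !![c * κj + a * νj, -(c * κi * κj + νi * νj + a * κi * νj + b * κj * νi);
           c, -(c * κi + b * νi)]) = 1) := by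
  have ha' : (a : ℂ) = li - lij := by exact_mod_cast ha
  have hb' : (b : ℂ) = lj - lji := by exact_mod_cast hb
  have hc' : (c : ℂ) = a * b + νij := by exact_mod_cast hc
  have hcross := plumbing_return_mul_denom ha' hb' hc' h1 h2 h3
  have hD := plumbing_denom_ne_zero (Complex.ofReal_ne_zero.mpr hνi)
    (Complex.ofReal_ne_zero.mpr hνj) (Complex.ofReal_ne_zero.mpr hνij) ha' hb' hc' h1 h2 h3
  have hdet : (schottkyGenMatrix κi κj νi νj a b c).det = νi * νj * νij := by
    rw [det_schottkyGenMatrix, hc, add_sub_cancel_left]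
  refine ⟨(eq_div_iff hD).mpr hcross, ?_, hdet, fun hpos => ?_⟩
  · rw [eq_div_iff fun h => hD (by linear_combination h)]
    linear_combination hcross
  · rw [← hdet] at hpos ⊢
    exact Matrix.det_inv_sqrt_det_smul hpos
end

section
/- Let 0 < N < M, let κ_1 < ... < κ_M be reals, and let A = (a_{k,j}) be an irreducible totally nonnegative N×M matrix of rank N in reduced row echelon form with pivot columns I_0 = {i_1 < ... < i_N}. Let P_1(A) = { [i_k, j] : j ∉ I_0, a_{k,j} ≠ 0 }, let g = |P_1(A)|, and let ℓ : P_1(A) → {1,...,g} be the bijection ordering the pairs by ℓ([i,k]) < ℓ([i,l]) if k > l and ℓ([i,·]) < ℓ([j,·]) if i < j. For p = ℓ([i_k, j]) define the phase φ_p(x,y,t) = (κ_j − κ_{i_k})x + (κ_j² − κ_{i_k}²)y + (κ_j³ − κ_{i_k}³)t, the constant e^{φ⁰_p} = a_{k,j} · Π_{l≠k}(κ_{i_l} − κ_j) / Π_{l≠k}(κ_{i_l} − κ_{i_k}), and φ̃_p = φ_p + φ⁰_p; and for p = ℓ([i_k, j]), q = ℓ([i_l, j']) with p < q define C_{p,q}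 = ((κ_{i_k} − κ_{i_l})(κ_j − κ_{j'})) / ((κ_{i_k} − κ_{j'})(κ_j − κ_{i_l})). Then the normalized τ-function τ(x,y,t) = Σ_{J} Δ_J(A) · ( Π_{k<l∈J}(κ_l − κ_k) / Π_{k<l∈I_0}(κ_l − κ_k) ) · exp( Σ_{j∈J} ξ_j − Σ_{i∈I_0} ξ_i ), summed over all N-element subsets J with Δ_J(A) ≠ 0, equals the M-theta function Σ_{m∈{0,1}^g} ( Π_{p<q, m_p=m_q=1} C_{p,q} ) · exp( Σ_{p: m_p=1} φ̃_p(x,y,t) ) for all (x,y,t) ∈ ℝ³, where ξ_j(x,y,t) = κ_j x + κ_j² y + κ_j³ t. -/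
/-!
Expanding each minor by the Leibniz formula (Cauchy–Binet for an alternating function of the
columns) turns the normalized τ-function into a sum over column choices `c : Fin N → Fin M` of
`∏ₖ A k (c k)` times the Vandermonde determinant of `κ ∘ c`, divided by that of `κ ∘ piv`.
The exponentials only rescale the columns of `A`; renormalizing the rows keeps the pivots equal
to `1`. As `A` is in reduced row echelon form, a choice with nonzero weight takes in each row
either its pivot or an entry of `P₁(A)`, so it is the graph of a set of labels with at most one
label per row; sets with two labels in one row contribute nothing, since the cross-ratio of two
labels in the same row vanishes. With `a_k = κ (piv k)` and `b_k = κ (c k)`, the ratio of the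
Vandermonde determinants factors pairwise: `(b_l - b_k)/(a_l - a_k)` is the cross-ratio of rows
`k, l` times `(a_l - b_k)/(a_l - a_k)` and `(a_k - b_l)/(a_k - a_l)`, and these last factors
regroup row by row into `e^{φ⁰}`; pairs involving an unmoved row contribute `1`.
-/

open Finset

/-- The `N×N` minor of the `N×M` matrix `A` on the columns indexed by the
`N`-element subset `J ⊆ {1,…,M}` (the Plücker coordinate `Δ_J(A)`). -/
noncomputable def kpMinor {N M : ℕ} (A : Matrix (Fin N) (Fin M) ℝ) (I : Finset (Fin M)) : ℝ :=
  if h : I.card = N then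
    Matrix.det (Matrix.of fun k l : Fin N => A k (I.orderIsoOfFin h l).1)
  else 0

/-- The phase `ξ(κ)(x,y,t) = κx + κ²y + κ³t`. -/
def kpXi (κ x y t : ℝ) : ℝ := κ * x + κ ^ 2 * y + κ ^ 3 * t

namespace Finset

variable {α β M : Type*} [LinearOrder α] [LinearOrder β] [CommMonoid M]

theorem prod_offDiag_lt_image {s : Finset α} {ρ : α → β} (hρ : Set.InjOn ρ s)
    (f : β → β → M) :
    ∏ q ∈ (s.image ρ).offDiag with q.1 < q.2, f q.1 q.2 =
      ∏ p ∈ s.offDiag with p.1 < p.2, f (min (ρ p.1) (ρ p.2)) (max (ρ p.1) (ρ p.2)) := by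
  symm
  refine prod_nbij (fun p => (min (ρ p.1) (ρ p.2), max (ρ p.1) (ρ p.2))) ?_ ?_ ?_
    fun _ _ => rfl
  · rintro ⟨a, b⟩ hab
    simp only [mem_filter, mem_offDiag, mem_image] at hab ⊢
    have hρne : ρ a ≠ ρ b := fun h => hab.1.2.2 (hρ hab.1.1 hab.1.2.1 h)
    refine ⟨⟨?_, ?_, (min_lt_max.mpr hρne).ne⟩, min_lt_max.mpr hρne⟩
    · rcases min_choice (ρ a) (ρ b) with h | h <;> rw [h] <;> grind
    · rcases max_choice (ρ a) (ρ b) with h | h <;> rw [h] <;> grind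
  · rintro ⟨a, b⟩ hab ⟨a', b'⟩ hab' h
    simp only [coe_filter, mem_offDiag, Set.mem_ofPred_eq, Prod.mk.injEq] at hab hab' h ⊢
    grind [Set.InjOn]
  · rintro ⟨x, y⟩ hxy
    simp only [coe_filter, mem_offDiag, mem_image, Set.mem_ofPred_eq] at hxy
    obtain ⟨⟨⟨a, ha, rfl⟩, ⟨b, hb, rfl⟩, -⟩, hlt⟩ := hxy
    rcases lt_or_gt_of_ne (hlt.ne <| congrArg ρ ·) with h | h
    · exact ⟨(a, b), by simp [ha, hb, h, h.ne],
        by simp [min_eq_left hlt.le, max_eq_right hlt.le]⟩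
    · exact ⟨(b, a), by simp [ha, hb, h, h.ne],
        by simp [min_eq_right hlt.le, max_eq_left hlt.le]⟩

theorem prod_offDiag_lt_univ [Fintype α] [LocallyFiniteOrderTop α] (f : α → α → M) :
    ∏ p ∈ (univ : Finset α).offDiag with p.1 < p.2, f p.1 p.2 =
      ∏ i, ∏ j ∈ Ioi i, f i j :=
  prod_finset_product' _ _ _ (by simp +contextual [LT.lt.ne])

end Finset

namespace Matrix

variable {R α : Type*} [CommRing R] [LinearOrder α] {n : ℕ}

theorem det_vandermonde_comp_of_strictMono {e : Fin n → α} (he : StrictMono e) (f : α → R) :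
    det (vandermonde (f ∘ e)) =
      ∏ q ∈ (univ.image e).offDiag with q.1 < q.2, (f q.2 - f q.1) := by
  rw [prod_offDiag_lt_image he.injective.injOn (fun x y => f y - f x), det_vandermonde,
    ← prod_offDiag_lt_univ]
  refine prod_congr rfl fun p hp => ?_
  have hlt := he (mem_filter.mp hp).2
  simp [min_eq_left hlt.le, max_eq_right hlt.le]

end Matrix

section CrossRatio

variable {F : Type*} [Field F]

def crossRatio (a b a' b' : F) : F := (a - a') * (b - b') / ((a - b') * (b - a'))

theorem crossRatio_comm (a b a' b' : F) : crossRatio a b a' b' = crossRatio a' b' a b := by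
  unfold crossRatio
  rw [← neg_sub a a', ← neg_sub b b', ← neg_sub b' a, ← neg_sub a' b]
  ring

theorem crossRatio_self_left_eq_one {a a' b' : F} (h : a ≠ a') (h' : a ≠ b') :
    crossRatio a a a' b' = 1 := by
  rw [crossRatio, mul_comm (a - a'),
    div_self (mul_ne_zero (sub_ne_zero.mpr h') (sub_ne_zero.mpr h))]

theorem crossRatio_self_fst_eq_zero (a b b' : F) : crossRatio a b a b' = 0 := by
  simp [crossRatio]

theorem det_vandermonde_eq_mul_prod_crossRatio {n : ℕ} {a b : Fin n → F}
    (ha : Function.Injective a) (hab : ∀ k l, k ≠ l → a k ≠ b l) :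
    (Matrix.vandermonde b).det = (Matrix.vandermonde a).det *
      ((∏ k, ∏ l ∈ Ioi k, crossRatio (a k) (b k) (a l) (b l)) *
        ∏ k, (∏ l ∈ univ.erase k, (a l - b k)) / ∏ l ∈ univ.erase k, (a l - a k)) := by
  have hpair : ∀ k, ∀ l ∈ Ioi k, b l - b k = (a l - a k) *
      (crossRatio (a k) (b k) (a l) (b l) *
        ((a l - b k) / (a l - a k) * ((a k - b l) / (a k - a l)))) := by
    intro k l hl
    have hkl : k ≠ l := (mem_Ioi.mp hl).ne
    have h1 := sub_ne_zero.mpr (ha.ne hkl)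
    have h2 := sub_ne_zero.mpr (ha.ne hkl.symm)
    have h3 := sub_ne_zero.mpr (hab k l hkl)
    have h4 := sub_ne_zero.mpr (hab l k hkl.symm).symm
    rw [crossRatio]
    field_simp
    ring
  have he0 : ∏ k, (∏ l ∈ univ.erase k, (a l - b k)) / ∏ l ∈ univ.erase k, (a l - a k) =
      ∏ k, ∏ l ∈ Ioi k, ((a l - b k) / (a l - a k) * ((a k - b l) / (a k - a l))) := by
    rw [prod_prod_Ioi_mul_eq_prod_prod_off_diag (fun l k => (a l - b k) / (a l - a k))]
    simp_rw [compl_singleton, prod_div_distrib]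
  rw [he0, Matrix.det_vandermonde, Matrix.det_vandermonde,
    prod_congr rfl fun k _ => prod_congr rfl (hpair k)]
  simp only [prod_mul_distrib]

end CrossRatio

/-- Cauchy–Binet, for an alternating function `w` of the columns. -/
theorem sum_prod_mul_eq_sum_kpMinor_mul {N M : ℕ} (A : Matrix (Fin N) (Fin M) ℝ)
    {w : (Fin N → Fin M) → ℝ}
    (hw_perm : ∀ c (σ : Equiv.Perm (Fin N)), w (c ∘ σ) = Equiv.Perm.sign σ * w c)
    (hw_inj : ∀ c, ¬ Function.Injective c → w c = 0)
    {W : Finset (Fin M) → ℝ} (hW : ∀ J (hJ : J.card = N), W J = w (J.orderEmbOfFin hJ)) :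
    ∑ c, (∏ k, A k (c k)) * w c = ∑ J ∈ powersetCard N univ, kpMinor A J * W J := by
  rw [← sum_filter_of_ne (p := Function.Injective)
      fun c _ h => by_contra fun hc => h (by rw [hw_inj c hc, mul_zero]),
    ← sum_fiberwise_of_maps_to (g := fun c => univ.image c) (t := powersetCard N univ)
      fun c hc => mem_powersetCard.mpr ⟨subset_univ _, by
        rw [card_image_of_injective _ (mem_filter.mp hc).2, card_univ, Fintype.card_fin]⟩]
  refine sum_congr rfl fun J hJ => ?_
  have hcard : J.card = N := (mem_powersetCard.mp hJ).2
  set e := J.orderEmbOfFin hcard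
  rw [hW J hcard, kpMinor, dif_pos hcard, ← Matrix.det_transpose, Matrix.det_apply', sum_mul]
  symm
  refine sum_bij (fun σ _ => e ∘ σ) ?_ ?_ ?_ ?_
  · intro σ _
    simp only [mem_filter, mem_univ, true_and]
    refine ⟨e.injective.comp σ.injective, ?_⟩
    rw [← image_image, image_univ_equiv, image_orderEmbOfFin_univ]
  · intro σ _ τ _ h
    exact Equiv.ext fun k => e.injective (congrFun h k)
  · intro c hc
    simp only [mem_filter, mem_univ, true_and] at hc
    have hmem : ∀ k, c k ∈ Set.range e := fun k => by
      rw [range_orderEmbOfFin, ← hc.2]; simp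
    choose σ hσ using hmem
    have hσinj : Function.Injective σ := fun k l h => hc.1 (by rw [← hσ k, ← hσ l, h])
    exact ⟨Equiv.ofBijective σ hσinj.bijective_of_finite, mem_univ _, funext hσ⟩
  · intro σ _
    rw [hw_perm]
    simp only [Matrix.transpose_apply, Matrix.of_apply, coe_orderIsoOfFin_apply,
      Function.comp_apply]
    ring

theorem sum_kpMinor_mul_div_eq_sum_prod_div {N M : ℕ} (A : Matrix (Fin N) (Fin M) ℝ)
    (κ : Fin M → ℝ) {piv : Fin N → Fin M} (hpiv : StrictMono piv) (w : Fin M → ℝ) :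
    ∑ J ∈ powersetCard N univ with kpMinor A J ≠ 0, kpMinor A J *
        ((∏ p ∈ J.offDiag with p.1 < p.2, (κ p.2 - κ p.1)) /
          ∏ p ∈ (univ.image piv).offDiag with p.1 < p.2, (κ p.2 - κ p.1)) *
        ((∏ j ∈ J, w j) / ∏ k, w (piv k)) =
      (∑ c : Fin N → Fin M, (∏ k, A k (c k) * w (c k) / w (piv k)) *
        (Matrix.vandermonde (κ ∘ c)).det) / (Matrix.vandermonde (κ ∘ piv)).det := by
  have hCB := sum_prod_mul_eq_sum_kpMinor_mul A
    (w := fun c => (Matrix.vandermonde (κ ∘ c)).det * ∏ k, w (c k))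
    (fun c σ => by
      rw [show Matrix.vandermonde (κ ∘ c ∘ σ) =
        (Matrix.vandermonde (κ ∘ c)).submatrix σ id from rfl, Matrix.det_permute]
      simp only [Function.comp_apply]
      rw [Equiv.prod_comp σ (fun k => w (c k)), mul_assoc])
    (fun c hc => by
      obtain ⟨k, l, hkl, hne⟩ := Function.not_injective_iff.mp hc
      rw [Matrix.det_zero_of_row_eq hne (funext fun i => by simp [hkl]), zero_mul])
    (W := fun J => (∏ p ∈ J.offDiag with p.1 < p.2, (κ p.2 - κ p.1)) * ∏ j ∈ J, w j)
    (fun J hJ => by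
      have hprod := prod_map univ (J.orderEmbOfFin hJ).toEmbedding w
      rw [map_orderEmbOfFin_univ] at hprod
      rw [Matrix.det_vandermonde_comp_of_strictMono (J.orderEmbOfFin hJ).strictMono,
        image_orderEmbOfFin_univ, hprod]
      rfl)
  rw [sum_filter_of_ne (p := fun J => kpMinor A J ≠ 0)
      fun J _ h h0 => h (by rw [h0, zero_mul, zero_mul]),
    ← Matrix.det_vandermonde_comp_of_strictMono hpiv]
  calc _ = (∑ J ∈ powersetCard N univ, kpMinor A J *
          ((∏ p ∈ J.offDiag with p.1 < p.2, (κ p.2 - κ p.1)) * ∏ j ∈ J, w j)) /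
        ((Matrix.vandermonde (κ ∘ piv)).det * ∏ k, w (piv k)) := by
        rw [sum_div]
        exact sum_congr rfl fun J _ => by ring
    _ = _ := by
        rw [← hCB, sum_div, sum_div]
        refine sum_congr rfl fun c _ => ?_
        rw [prod_div_distrib, prod_mul_distrib]
        ring

section MTheta

variable {F : Type*} [Field F] {n : ℕ} {β ι : Type*}
  (κ : β → F) (piv : Fin n → β) (π : ι → Fin n × β) (A : Matrix (Fin n) β F)

/-- `e^{φ⁰}` of the label `q = (k, j)`. -/
def labelWeight (q : Fin n × β) : F :=
  A q.1 q.2 * (∏ l ∈ univ.erase q.1, (κ (piv l) - κ q.2)) /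
    ∏ l ∈ univ.erase q.1, (κ (piv l) - κ (piv q.1))

def labelCrossRatio (q q' : Fin n × β) : F :=
  crossRatio (κ (piv q.1)) (κ q.2) (κ (piv q'.1)) (κ q'.2)

/-- The term of the M-theta function at `x = y = t = 0` indexed by the set of labels `S`. -/
def thetaTerm [Fintype ι] [LinearOrder ι] (S : Finset ι) : F :=
  (∏ p ∈ univ.filter (fun p : ι × ι => p.1 < p.2 ∧ p.1 ∈ S ∧ p.2 ∈ S),
      labelCrossRatio κ piv (π p.1) (π p.2)) *
    ∏ r ∈ S, labelWeight κ piv A (π r)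

def graphLabels [DecidableEq β] [Fintype ι] (c : Fin n → β) : Finset ι :=
  univ.filter fun r => (π r).2 = c (π r).1

def IsAdmissible (c : Fin n → β) : Prop :=
  ∀ k, c k = piv k ∨ ∃ r, π r = (k, c k)

variable {κ piv π A} [Fintype ι]

theorem injOn_of_thetaTerm_ne_zero [LinearOrder ι] {S : Finset ι}
    (h : thetaTerm κ piv π A S ≠ 0) : Set.InjOn (fun r => (π r).1) S := by
  intro r hr s hs hrs
  simp only at hrs
  by_contra hne
  refine h (mul_eq_zero_of_left ?_ _)
  rcases lt_or_gt_of_ne hne with hlt | hlt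
  · exact prod_eq_zero (i := (r, s)) (by simp [hlt, mem_coe.mp hr, mem_coe.mp hs])
      (by rw [labelCrossRatio, hrs, crossRatio_self_fst_eq_zero])
  · exact prod_eq_zero (i := (s, r)) (by simp [hlt, mem_coe.mp hr, mem_coe.mp hs])
      (by rw [labelCrossRatio, hrs, crossRatio_self_fst_eq_zero])

variable [DecidableEq β]

theorem injOn_graphLabels (hπ : Function.Injective π) (c : Fin n → β) :
    Set.InjOn (fun r => (π r).1) (graphLabels π c) := by
  intro r hr s hs h
  have hr := (mem_filter.mp hr).2
  have hs := (mem_filter.mp hs).2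
  exact hπ (Prod.ext h (by rw [hr, hs]; exact congrArg c h))

theorem mem_image_graphLabels {c : Fin n → β} {k : Fin n} :
    k ∈ (graphLabels π c).image (fun r => (π r).1) ↔ ∃ r, π r = (k, c k) := by
  simp only [graphLabels, mem_image, mem_filter, mem_univ, true_and]
  constructor
  · rintro ⟨r, hr, rfl⟩
    exact ⟨r, Prod.ext rfl hr⟩
  · rintro ⟨r, hr⟩
    exact ⟨r, by simp [hr], by simp [hr]⟩

theorem IsAdmissible.eq_piv_of_notMem {c : Fin n → β} (hc : IsAdmissible piv π c) {k : Fin n}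
    (hk : k ∉ (graphLabels π c).image (fun r => (π r).1)) : c k = piv k :=
  (hc k).resolve_right (mt mem_image_graphLabels.mpr hk)

theorem prod_graphLabels {M : Type*} [CommMonoid M] (hπ : Function.Injective π)
    {c : Fin n → β} (hc : IsAdmissible piv π c) (f : Fin n → β → M)
    (hf : ∀ k, f k (piv k) = 1) :
    ∏ r ∈ graphLabels π c, f (π r).1 (π r).2 = ∏ k, f k (c k) := by
  have hcol : ∀ r ∈ graphLabels π c, (π r).2 = c (π r).1 := fun r hr => (mem_filter.mp hr).2
  rw [prod_congr rfl fun r hr => by rw [hcol r hr],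
    ← prod_image (f := fun k => f k (c k)) (injOn_graphLabels hπ c)]
  exact prod_subset (subset_univ _) fun k _ hk => by rw [hc.eq_piv_of_notMem hk, hf]

theorem prod_pairs_graphLabels [LinearOrder ι] {M : Type*} [CommMonoid M]
    (hπ : Function.Injective π) {c : Fin n → β} (hc : IsAdmissible piv π c)
    (f : Fin n → Fin n → M)
    (hf_comm : ∀ k l, f k l = f l k) (hf : ∀ k l, k ≠ l → c k = piv k → f k l = 1) :
    ∏ p ∈ univ.filter (fun p : ι × ι =>
        p.1 < p.2 ∧ p.1 ∈ graphLabels π c ∧ p.2 ∈ graphLabels π c),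
      f (π p.1).1 (π p.2).1 = ∏ k, ∏ l ∈ Ioi k, f k l := by
  have hpairs : univ.filter (fun p : ι × ι =>
      p.1 < p.2 ∧ p.1 ∈ graphLabels π c ∧ p.2 ∈ graphLabels π c) =
      (graphLabels π c).offDiag.filter (fun p => p.1 < p.2) := by
    ext p
    simp only [mem_filter, mem_univ, true_and, mem_offDiag]
    exact ⟨fun h => ⟨⟨h.2.1, h.2.2, h.1.ne⟩, h.1⟩, fun h => ⟨h.2, h.1.1, h.1.2.1⟩⟩
  have hminmax : ∀ k l, f (min k l) (max k l) = f k l := fun k l => by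
    rcases le_total k l with h | h
    · rw [min_eq_left h, max_eq_right h]
    · rw [min_eq_right h, max_eq_left h, hf_comm]
  rw [hpairs, ← prod_offDiag_lt_univ]
  simp_rw [← hminmax (π _).1]
  rw [← prod_offDiag_lt_image (injOn_graphLabels hπ c)]
  refine prod_subset (fun p hp => ?_) fun p hp hp' => ?_
  · simp only [mem_filter, mem_offDiag] at hp ⊢
    exact ⟨⟨mem_univ _, mem_univ _, hp.1.2.2⟩, hp.2⟩
  · simp only [mem_filter, mem_offDiag, mem_univ, true_and] at hp hp'
    by_cases h1 : p.1 ∈ (graphLabels π c).image (fun r => (π r).1)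
    · have h2 : p.2 ∉ (graphLabels π c).image (fun r => (π r).1) :=
        fun h2 => hp' ⟨⟨h1, h2, hp.1⟩, hp.2⟩
      rw [hf_comm, hf _ _ hp.1.symm (hc.eq_piv_of_notMem h2)]
    · exact hf _ _ hp.1 (hc.eq_piv_of_notMem h1)

theorem det_mul_thetaTerm_graphLabels [LinearOrder ι] (hκ : Function.Injective κ)
    (hpiv : Function.Injective piv) (hπ : Function.Injective π)
    (hπcol : ∀ r k, (π r).2 ≠ piv k) (hA : ∀ k, A k (piv k) = 1) {c : Fin n → β}
    (hc : IsAdmissible piv π c) :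
    (∏ k, A k (c k)) * (Matrix.vandermonde (κ ∘ c)).det =
      (Matrix.vandermonde (κ ∘ piv)).det * thetaTerm κ piv π A (graphLabels π c) := by
  have hab : ∀ k l, k ≠ l → κ (piv k) ≠ κ (c l) := by
    intro k l hkl h
    rcases hc l with hl | ⟨r, hr⟩
    · exact hkl (hpiv (hκ (h.trans (congrArg κ hl))))
    · exact hπcol r k (by rw [hr]; exact (hκ h).symm)
  have hcross : ∏ p ∈ univ.filter (fun p : ι × ι =>
        p.1 < p.2 ∧ p.1 ∈ graphLabels π c ∧ p.2 ∈ graphLabels π c),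
        labelCrossRatio κ piv (π p.1) (π p.2) =
      ∏ k, ∏ l ∈ Ioi k, crossRatio (κ (piv k)) (κ (c k)) (κ (piv l)) (κ (c l)) := by
    rw [← prod_pairs_graphLabels hπ hc _ (fun k l => crossRatio_comm _ _ _ _)
      fun k l hkl hk => by
        rw [hk]; exact crossRatio_self_left_eq_one (hκ.ne (hpiv.ne hkl)) (hab k l hkl)]
    refine prod_congr rfl fun p hp => ?_
    obtain ⟨-, h1, h2⟩ := (mem_filter.mp hp).2
    rw [labelCrossRatio, (mem_filter.mp h1).2, (mem_filter.mp h2).2]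
  have hweight : ∏ r ∈ graphLabels π c, labelWeight κ piv A (π r) =
      (∏ k, A k (c k)) * ∏ k, (∏ l ∈ univ.erase k, (κ (piv l) - κ (c k))) /
        ∏ l ∈ univ.erase k, (κ (piv l) - κ (piv k)) := by
    rw [prod_graphLabels hπ hc (fun k j => labelWeight κ piv A (k, j)) fun k => ?_,
      ← prod_mul_distrib]
    · exact prod_congr rfl fun k _ => mul_div_assoc _ _ _
    · rw [labelWeight, hA, one_mul, div_self (prod_ne_zero_iff.mpr fun l hl =>
        sub_ne_zero.mpr (hκ.ne (hpiv.ne (ne_of_mem_erase hl))))]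
  rw [thetaTerm, hcross, hweight,
    det_vandermonde_eq_mul_prod_crossRatio (hκ.comp hpiv) (b := κ ∘ c) hab]
  simp only [Function.comp_apply]
  ring

theorem exists_isAdmissible_graphLabels_eq (hπ : Function.Injective π)
    (hπcol : ∀ r k, (π r).2 ≠ piv k) {S : Finset ι} (hS : Set.InjOn (fun r => (π r).1) S) :
    ∃ c, IsAdmissible piv π c ∧ graphLabels π c = S := by
  classical
  let c : Fin n → β := fun k => if h : ∃ r ∈ S, (π r).1 = k then (π h.choose).2 else piv k
  have hc_label : ∀ r ∈ S, c (π r).1 = (π r).2 := by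
    intro r hr
    have h : ∃ r' ∈ S, (π r').1 = (π r).1 := ⟨r, hr, rfl⟩
    simp only [c, dif_pos h]
    rw [hS h.choose_spec.1 hr h.choose_spec.2]
  have hc_piv : ∀ k, (¬ ∃ r ∈ S, (π r).1 = k) → c k = piv k := fun k h => dif_neg h
  refine ⟨c, fun k => ?_, ?_⟩
  · by_cases h : ∃ r ∈ S, (π r).1 = k
    · obtain ⟨r, hr, rfl⟩ := h
      exact Or.inr ⟨r, Prod.ext rfl (hc_label r hr).symm⟩
    · exact Or.inl (hc_piv k h)
  · ext r
    simp only [graphLabels, mem_filter, mem_univ, true_and]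
    refine ⟨fun hr => ?_, fun hr => (hc_label r hr).symm⟩
    by_cases h : ∃ r' ∈ S, (π r').1 = (π r).1
    · obtain ⟨r', hr', h'⟩ := h
      rwa [hπ (Prod.ext h'.symm (by rw [hr, ← h', hc_label r' hr']) : π r = π r')]
    · exact absurd (hr.trans (hc_piv _ h)) (hπcol r _)

theorem IsAdmissible.eq_of_graphLabels_eq {c c' : Fin n → β} (hc : IsAdmissible piv π c)
    (hc' : IsAdmissible piv π c') (h : graphLabels π c = graphLabels π c') : c = c' := by
  have hlabel : ∀ {c c' : Fin n → β}, graphLabels π c = graphLabels π c' →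
      ∀ k r, π r = (k, c k) → c' k = c k := by
    intro c c' h k r hr
    have hr' : r ∈ graphLabels π c' := h ▸ mem_filter.mpr ⟨mem_univ _, by rw [hr]⟩
    simpa [hr] using ((mem_filter.mp hr').2).symm
  funext k
  rcases hc k with hk | ⟨r, hr⟩
  · rcases hc' k with hk' | ⟨r, hr⟩
    · rw [hk, hk']
    · exact hlabel h.symm k r hr
  · exact (hlabel h k r hr).symm

theorem sum_prod_mul_det_vandermonde [Fintype β] [LinearOrder ι] (hκ : Function.Injective κ)
    (hpiv : Function.Injective piv) (hπ : Function.Injective π)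
    (hπcol : ∀ r k, (π r).2 ≠ piv k) (hA : ∀ k, A k (piv k) = 1)
    (hsupp : ∀ k j, A k j ≠ 0 → j = piv k ∨ ∃ r, π r = (k, j)) :
    ∑ c : Fin n → β, (∏ k, A k (c k)) * (Matrix.vandermonde (κ ∘ c)).det =
      (Matrix.vandermonde (κ ∘ piv)).det * ∑ S, thetaTerm κ piv π A S := by
  have hadm : ∀ c, (∏ k, A k (c k)) * (Matrix.vandermonde (κ ∘ c)).det ≠ 0 →
      IsAdmissible piv π c := fun c h k =>
    hsupp k (c k) (prod_ne_zero_iff.mp (left_ne_zero_of_mul h) k (mem_univ k))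
  rw [mul_sum]
  refine sum_bij_ne_zero (fun c _ _ => graphLabels π c) (fun _ _ _ => mem_univ _) ?_ ?_ ?_
  · intro c _ hc c' _ hc' h
    exact (hadm c hc).eq_of_graphLabels_eq (hadm c' hc') h
  · intro S _ hS
    obtain ⟨c, hc, rfl⟩ := exists_isAdmissible_graphLabels_eq hπ hπcol
      (injOn_of_thetaTerm_ne_zero (right_ne_zero_of_mul hS))
    exact ⟨c, mem_univ _, by rwa [det_mul_thetaTerm_graphLabels hκ hpiv hπ hπcol hA hc], rfl⟩
  · intro c _ hc
    exact det_mul_thetaTerm_graphLabels hκ hpiv hπ hπcol hA (hadm c hc)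

theorem sum_prod_div_mul_det_vandermonde [Fintype β] [LinearOrder ι]
    (hκ : Function.Injective κ) (hpiv : Function.Injective piv) (hπ : Function.Injective π)
    (hπcol : ∀ r k, (π r).2 ≠ piv k) (hA : ∀ k, A k (piv k) = 1)
    (hsupp : ∀ k j, A k j ≠ 0 → j = piv k ∨ ∃ r, π r = (k, j)) {w : β → F}
    (hw : ∀ j, w j ≠ 0) :
    ∑ c : Fin n → β,
        (∏ k, A k (c k) * w (c k) / w (piv k)) * (Matrix.vandermonde (κ ∘ c)).det =
      (Matrix.vandermonde (κ ∘ piv)).det *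
        ∑ S, thetaTerm κ piv π A S * ∏ r ∈ S, w (π r).2 / w (piv (π r).1) := by
  set A' : Matrix (Fin n) β F := Matrix.of fun k j => A k j * w j / w (piv k)
  have hA' : ∀ k, A' k (piv k) = 1 := fun k => by simp [A', hA, hw]
  have hsupp' : ∀ k j, A' k j ≠ 0 → j = piv k ∨ ∃ r, π r = (k, j) :=
    fun k j h => hsupp k j fun h0 => h (by simp [A', h0])
  have hθ : ∀ S, thetaTerm κ piv π A' S =
      thetaTerm κ piv π A S * ∏ r ∈ S, w (π r).2 / w (piv (π r).1) := fun S => by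
    rw [thetaTerm, thetaTerm, mul_assoc, ← prod_mul_distrib]
    congr 1
    refine prod_congr rfl fun r _ => ?_
    simp only [labelWeight, A', Matrix.of_apply]
    ring
  simp_rw [← hθ]
  exact sum_prod_mul_det_vandermonde hκ hpiv hπ hπcol hA' hsupp'

end MTheta

theorem eq_or_notMem_image_of_ne_zero {N M : ℕ} {R : Type*} [Zero R]
    {A : Matrix (Fin N) (Fin M) R} {piv : Fin N → Fin M}
    (hcol : ∀ k k', k' ≠ k → A k' (piv k) = 0) {k : Fin N} {j : Fin M}
    (h : A k j ≠ 0) : j = piv k ∨ j ∉ univ.image piv := by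
  refine or_iff_not_imp_right.mpr fun hj => ?_
  obtain ⟨k', -, rfl⟩ := mem_image.mp (not_not.mp hj)
  by_contra hk
  exact h (hcol k' k fun hkk' => hk (congrArg piv hkk'.symm))

theorem tau_eq_MTheta_general {N M : ℕ}
    (κ : Fin M → ℝ) (hκ : StrictMono κ)
    (A : Matrix (Fin N) (Fin M) ℝ)
    (piv : Fin N → Fin M) (hpiv : StrictMono piv)
    (hpiv1 : ∀ k, A k (piv k) = 1)
    (hcol : ∀ k k', k' ≠ k → A k' (piv k) = 0)
    (P1 : Finset (Fin N × Fin M))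
    (hP1 : P1 = Finset.univ.filter (fun pr : Fin N × Fin M =>
      pr.2 ∉ Finset.image piv Finset.univ ∧ A pr.1 pr.2 ≠ 0))
    (g : ℕ)
    (ℓ : {pr // pr ∈ P1} ≃ Fin g)
    (φ : Fin g → ℝ → ℝ → ℝ → ℝ)
    (hφ : ∀ r x y t, φ r x y t
      = kpXi (κ (ℓ.symm r).1.2) x y t - kpXi (κ (piv (ℓ.symm r).1.1)) x y t)
    (E0 : Fin g → ℝ)   -- `E0 r = exp(φ⁰_r)`
    (hE0 : ∀ r, E0 r
      = A (ℓ.symm r).1.1 (ℓ.symm r).1.2 *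
          (∏ l ∈ Finset.univ.erase (ℓ.symm r).1.1, (κ (piv l) - κ (ℓ.symm r).1.2)) /
          (∏ l ∈ Finset.univ.erase (ℓ.symm r).1.1, (κ (piv l) - κ (piv (ℓ.symm r).1.1))))
    (C : Fin g → Fin g → ℝ)
    (hC : ∀ r s, C r s
      = ((κ (piv (ℓ.symm r).1.1) - κ (piv (ℓ.symm s).1.1)) *
         (κ (ℓ.symm r).1.2 - κ (ℓ.symm s).1.2)) /
        ((κ (piv (ℓ.symm r).1.1) - κ (ℓ.symm s).1.2) *
         (κ (ℓ.symm r).1.2 - κ (piv (ℓ.symm s).1.1)))) :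
    ∀ x y t : ℝ,
      (∑ J ∈ (Finset.powersetCard N (Finset.univ : Finset (Fin M))).filter
          (fun J => kpMinor A J ≠ 0),
        kpMinor A J *
          ((∏ pr ∈ J.offDiag.filter (fun pr => pr.1 < pr.2), (κ pr.2 - κ pr.1)) /
           (∏ pr ∈ (Finset.image piv Finset.univ).offDiag.filter (fun pr => pr.1 < pr.2),
              (κ pr.2 - κ pr.1))) *
          Real.exp ((∑ j ∈ J, kpXi (κ j) x y t) - ∑ k, kpXi (κ (piv k)) x y t))
      = ∑ S : Finset (Fin g),
          (∏ pr ∈ Finset.univ.filter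
              (fun pr : Fin g × Fin g => pr.1 < pr.2 ∧ pr.1 ∈ S ∧ pr.2 ∈ S),
            C pr.1 pr.2) *
          (∏ p ∈ S, E0 p) *
          Real.exp (∑ p ∈ S, φ p x y t) := by
  intro x y t
  set w : Fin M → ℝ := fun j => Real.exp (kpXi (κ j) x y t)
  set π : Fin g → Fin N × Fin M := fun r => (ℓ.symm r).1
  have hπcol : ∀ r k, (π r).2 ≠ piv k := fun r k h => by
    have hr := (ℓ.symm r).2
    simp only [hP1, mem_filter] at hr
    exact hr.2.1 (h ▸ mem_image_of_mem piv (mem_univ k))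
  have hsupp : ∀ k j, A k j ≠ 0 → j = piv k ∨ ∃ r, π r = (k, j) := fun k j h =>
    (eq_or_notMem_image_of_ne_zero hcol h).imp_right fun hj =>
      ⟨ℓ ⟨(k, j), by rw [hP1, mem_filter]; exact ⟨mem_univ _, hj, h⟩⟩, by simp [π]⟩
  simp_rw [Real.exp_sub, Real.exp_sum]
  refine (sum_kpMinor_mul_div_eq_sum_prod_div A κ hpiv w).trans ?_
  rw [sum_prod_div_mul_det_vandermonde hκ.injective hpiv.injective
    (Subtype.val_injective.comp ℓ.symm.injective) hπcol hpiv1 hsupp (π := π) (w := w)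
    fun j => (Real.exp_pos _).ne', mul_div_cancel_left₀ _
    (Matrix.det_vandermonde_ne_zero_iff.mpr (hκ.injective.comp hpiv.injective))]
  refine sum_congr rfl fun S _ => ?_
  rw [thetaTerm, mul_assoc, mul_assoc, ← prod_mul_distrib, ← prod_mul_distrib]
  congr 1
  · exact prod_congr rfl fun p _ => (hC _ _).symm
  · refine prod_congr rfl fun r _ => ?_
    rw [hE0, hφ, Real.exp_sub]
    rfl

/-- for an irreducible totally nonnegative `N×M` matrix `A` of rank `N` in
reduced row echelon form with pivot columns `piv`, with `P₁(A)` the set of pairs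
`(k, j)` with `j` a non-pivot column and `A k j ≠ 0`, `g = |P₁(A)|`, and `ℓ` the ordering
bijection of `P₁(A)` (pairs ordered by pivot row, and within a row by decreasing column),
the normalized τ-function equals the M-theta function: a finite sum over `m ∈ {0,1}^g`
(i.e. over subsets `S ⊆ {1,…,g}`) of products of cross-ratio coefficients `C_{p,q}`
times exponentials of the shifted phases `φ̃_p = φ_p + φ⁰_p`. -/
theorem tau_eq_MTheta {N M : ℕ} (hN : 0 < N) (hNM : N < M)
    (κ : Fin M → ℝ) (hκ : StrictMono κ)
    (A : Matrix (Fin N) (Fin M) ℝ) (hrank : A.rank = N)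
    (piv : Fin N → Fin M) (hpiv : StrictMono piv)
    (hpiv1 : ∀ k, A k (piv k) = 1)
    (hleft : ∀ k j, j < piv k → A k j = 0)
    (hcol : ∀ k k', k' ≠ k → A k' (piv k) = 0)
    (hirr_row : ∀ k, ∃ j, j ≠ piv k ∧ A k j ≠ 0)
    (hirr_col : ∀ j, ∃ k, A k j ≠ 0)
    (hTNN : ∀ J ∈ Finset.powersetCard N (Finset.univ : Finset (Fin M)), 0 ≤ kpMinor A J)
    (P1 : Finset (Fin N × Fin M))
    (hP1 : P1 = Finset.univ.filter (fun pr : Fin N × Fin M =>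
      pr.2 ∉ Finset.image piv Finset.univ ∧ A pr.1 pr.2 ≠ 0))
    (g : ℕ) (hg : g = P1.card)
    (ℓ : {pr // pr ∈ P1} ≃ Fin g)
    (hℓ : ∀ pr qr : {pr // pr ∈ P1},
      (pr.1.1 < qr.1.1 ∨ (pr.1.1 = qr.1.1 ∧ qr.1.2 < pr.1.2)) → ℓ pr < ℓ qr)
    (φ : Fin g → ℝ → ℝ → ℝ → ℝ)
    (hφ : ∀ r x y t, φ r x y t
      = kpXi (κ (ℓ.symm r).1.2) x y t - kpXi (κ (piv (ℓ.symm r).1.1)) x y t)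
    (E0 : Fin g → ℝ)   -- `E0 r = exp(φ⁰_r)`
    (hE0 : ∀ r, E0 r
      = A (ℓ.symm r).1.1 (ℓ.symm r).1.2 *
          (∏ l ∈ Finset.univ.erase (ℓ.symm r).1.1, (κ (piv l) - κ (ℓ.symm r).1.2)) /
          (∏ l ∈ Finset.univ.erase (ℓ.symm r).1.1, (κ (piv l) - κ (piv (ℓ.symm r).1.1))))
    (C : Fin g → Fin g → ℝ)
    (hC : ∀ r s, C r s
      = ((κ (piv (ℓ.symm r).1.1) - κ (piv (ℓ.symm s).1.1)) *
         (κ (ℓ.symm r).1.2 - κ (ℓ.symm s).1.2)) /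
        ((κ (piv (ℓ.symm r).1.1) - κ (ℓ.symm s).1.2) *
         (κ (ℓ.symm r).1.2 - κ (piv (ℓ.symm s).1.1)))) :
    ∀ x y t : ℝ,
      (∑ J ∈ (Finset.powersetCard N (Finset.univ : Finset (Fin M))).filter
          (fun J => kpMinor A J ≠ 0),
        kpMinor A J *
          ((∏ pr ∈ J.offDiag.filter (fun pr => pr.1 < pr.2), (κ pr.2 - κ pr.1)) /
           (∏ pr ∈ (Finset.image piv Finset.univ).offDiag.filter (fun pr => pr.1 < pr.2),
              (κ pr.2 - κ pr.1))) *
          Real.exp ((∑ j ∈ J, kpXi (κ j) x y t) - ∑ k, kpXi (κ (piv k)) x y t))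
      = ∑ S : Finset (Fin g),
          (∏ pr ∈ Finset.univ.filter
              (fun pr : Fin g × Fin g => pr.1 < pr.2 ∧ pr.1 ∈ S ∧ pr.2 ∈ S),
            C pr.1 pr.2) *
          (∏ p ∈ S, E0 p) *
          Real.exp (∑ p ∈ S, φ p x y t) :=
  tau_eq_MTheta_general κ hκ A piv hpiv hpiv1 hcol P1 hP1 g ℓ φ hφ E0 hE0 C hC
end
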